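/- Every word w ∈ L₂(u) occurs in u_{[i, i+G)} for every i ∈ ℤ₊, where G = ⌈2C·(max_{a∈A}|σ(a)|)·λ^{n₀}⌉ and n₀ = (#A)⁴ − 2(#A)² + 2. In particular, the constant g is at most G. -/

import Mathlib

open List Filter

section Defs

variable {A : Type*}

/-- The segment `u_[i,j)` of the sequence `u`. -/
def seg (u : ℕ → A) (i j : ℕ) : List A :=
  (List.range (j - i)).map fun k => u (i + k)

/-- A substitution applied to a word, letter by letter. -/
def substWord (σ : A → List A) (w : List A) : List A := w.flatMap σ

/-- `σ^p` applied to a word. -/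
def substPow (σ : A → List A) (p : ℕ) (w : List A) : List A := (substWord σ)^[p] w

/-- A substitution is primitive if some power of it sends every letter to a word
containing every letter. -/
def IsPrimitiveSubst (σ : A → List A) : Prop :=
  ∃ k : ℕ, ∀ a b : A, a ∈ substPow σ k [b]

/-- `u` is a fixed point of `σ`: the image of every prefix of `u` is again a prefix of `u`. -/
def IsFixedPoint (σ : A → List A) (u : ℕ → A) : Prop :=
  ∀ m : ℕ, substWord σ (seg u 0 m) = seg u 0 (substWord σ (seg u 0 m)).length

/-- `u` is aperiodic under the left shift: `T^i u ≠ u` for all `i ≥ 1`. -/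
def AperiodicSeq (u : ℕ → A) : Prop := ∀ i : ℕ, 1 ≤ i → (fun n => u (n + i)) ≠ u

/-- The set `E_p` of natural `p`-cutting points. -/
def cutPoints (σ : A → List A) (u : ℕ → A) (p : ℕ) : Set ℕ :=
  { m | ∃ n : ℕ, m = (substPow σ p (seg u 0 n)).length }

/-- Unilateral recognizability of `σ` (with fixed point `u`). -/
def UnilaterallyRecognizable (σ : A → List A) (u : ℕ → A) : Prop :=
  ∃ L : ℕ, 1 ≤ L ∧ ∀ i j : ℕ,
    seg u i (i + L) = seg u j (j + L) → i ∈ cutPoints σ u 1 → j ∈ cutPoints σ u 1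

/-- `L_n(u)`: the set of factors of `u` of length `n`. -/
def factors (u : ℕ → A) (n : ℕ) : Set (List A) := { w | ∃ i : ℕ, w = seg u i (i + n) }

/-- `L(u)`: the language of `u` (including the empty word). -/
def lang (u : ℕ → A) : Set (List A) := { w | ∃ i n : ℕ, w = seg u i (i + n) }

/-- `w^n`: the concatenation of `n` copies of `w`. -/
def wpow (w : List A) (n : ℕ) : List A := (List.replicate n w).flatten

/-- A nonempty word `v` is primitive if `v = w^n` with `w` nonempty forces `w = v`. -/
def PrimitiveWord (v : List A) : Prop :=
  ∀ w : List A, w ≠ [] → ∀ n : ℕ, 1 ≤ n → v = wpow w n → w = v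

/-- `g` is a gap of occurrences of `w` in `u` if every interval of length `g` in `ℤ₊`
contains an occurrence of `w`. -/
def IsGap (u : ℕ → A) (w : List A) (g : ℕ) : Prop := ∀ i : ℕ, w <:+: seg u i (i + g)

/-- The minimal gap of a word. -/
noncomputable def minGap (u : ℕ → A) (w : List A) : ℕ := sInf { g | IsGap u w g }

/-- `g`: the maximum over `w ∈ L₂(u)` of the minimal gap of `w`. -/
noncomputable def gapConst (u : ℕ → A) : ℕ :=
  sSup { m | ∃ w ∈ factors u 2, m = minGap u w }

/-- A natural `p`-cutting `{α, σ^p(u_{i'}), …, σ^p(u_{i'+k-1}), β}` of `u_[i,i+ℓ)`. -/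
def IsNaturalCutting (σ : A → List A) (u : ℕ → A) (p i ℓ : ℕ)
    (α : List A) (i' k : ℕ) (β : List A) : Prop :=
  1 ≤ k ∧
  α <:+ substPow σ p [u (i' - 1)] ∧
  β <+: substPow σ p [u (i' + k)] ∧
  seg u i (i + ℓ) = α ++ substPow σ p (seg u i' (i' + k)) ++ β ∧
  i + α.length = (substPow σ p (seg u 0 i')).length

section Fin

variable [Fintype A] [Nonempty A] [DecidableEq A]

/-- The incidence matrix of a substitution: the `(a,b)` entry is `|σ(a)|_b`. -/
def incMatrix (σ : A → List A) : Matrix A A ℕ := Matrix.of fun a b => (σ a).count b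

/-- The incidence matrix as a real matrix. -/
noncomputable def incMatrixR (σ : A → List A) : Matrix A A ℝ :=
  Matrix.of fun a b => ((σ a).count b : ℝ)

/-- `S_p = max_{a ∈ A} |σ^p(a)|`. -/
def Sp (σ : A → List A) (p : ℕ) : ℕ :=
  Finset.univ.sup' Finset.univ_nonempty fun a => (substPow σ p [a]).length

/-- `I_p = min_{a ∈ A} |σ^p(a)|`. -/
def Ip (σ : A → List A) (p : ℕ) : ℕ :=
  Finset.univ.inf' Finset.univ_nonempty fun a => (substPow σ p [a]).length

/-- `C = ⌈(max_b β_b)/(min_b β_b)⌉` for a positive eigenvector `β`. -/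
noncomputable def Cst (β : A → ℝ) : ℕ :=
  ⌈(Finset.univ.sup' Finset.univ_nonempty β) / (Finset.univ.inf' Finset.univ_nonempty β)⌉₊

/-- `K = ⌈λ C² max{2(g+1), (#A)²}⌉`. -/
noncomputable def Kst (u : ℕ → A) (lam : ℝ) (β : A → ℝ) : ℕ :=
  ⌈lam * (Cst β : ℝ) ^ 2 *
    max (2 * ((gapConst u : ℝ) + 1)) ((Fintype.card A : ℝ) ^ 2)⌉₊

/-- The constant `p₀` of Lemma 4.2. -/
noncomputable def p0 (u : ℕ → A) (lam : ℝ) (β : A → ℝ) : ℕ :=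
  (Kst u lam β) ^ 2 * ((Cst β) ^ 4 * (Kst u lam β + 1) + 2 * (Cst β) ^ 2 + 1) *
    (∑ n ∈ Finset.Icc ((Cst β) ^ 2 * (Kst u lam β + 1) + 2)
        ((Kst u lam β + 1) * (Cst β) ^ 6 + 2 * (Cst β) ^ 4 + (Cst β) ^ 2 + 2), n) + 1

/-- The constant `L₀ = (C⁴(K+1)+2C²+1) S_{p₀}`. -/
noncomputable def L0 (σ : A → List A) (u : ℕ → A) (lam : ℝ) (β : A → ℝ) : ℕ :=
  ((Cst β) ^ 4 * (Kst u lam β + 1) + 2 * (Cst β) ^ 2 + 1) * Sp σ (p0 u lam β)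

/-- The ℓ¹ norm of a vector. -/
def l1norm (f : A → ℝ) : ℝ := ∑ a, |f a|

/-- The projective metric on positive row vectors. -/
noncomputable def projMetric (x y : A → ℝ) : ℝ :=
  Real.log ((Finset.univ.sup' Finset.univ_nonempty fun a => x a / y a) /
    (Finset.univ.inf' Finset.univ_nonempty fun a => x a / y a))

/-- The Birkhoff contraction coefficient of a matrix. -/
noncomputable def birkhoff (M : Matrix A A ℝ) : ℝ :=
  sSup { r | ∃ x y : A → ℝ, (∀ a, 0 < x a) ∧ (∀ a, 0 < y a) ∧
    LinearIndependent ℝ ![x, y] ∧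
    r = projMetric (Matrix.vecMul x M) (Matrix.vecMul y M) / projMetric x y }

end Fin

/-- Membership in the vertex set `V^*`: pairs `(xac, ybc)` of factors of `u` of length
`N + L₁ + 1` with `a ≠ b` and `|c| = L₁`. -/
def memVstar (u : ℕ → A) (N L₁ : ℕ) (p : List A × List A) : Prop :=
  ∃ (x y c : List A) (a b : A), a ≠ b ∧
    x.length = N ∧ y.length = N ∧ c.length = L₁ ∧
    p.1 = x ++ a :: c ∧ p.2 = y ++ b :: c ∧
    p.1 ∈ factors u (N + L₁ + 1) ∧ p.2 ∈ factors u (N + L₁ + 1)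

/-- An edge between representatives: there is a word `w` with `s'w` a suffix of `σ(s)` and
`t'w` a suffix of `σ(t)`. -/
def edgeRep (σ : A → List A) (p q : List A × List A) : Prop :=
  ∃ w : List A, w ≠ [] ∧ (q.1 ++ w) <:+ substWord σ p.1 ∧ (q.2 ++ w) <:+ substWord σ p.2

/-- An edge in the graph `G` between the unordered pairs represented by `p` and `q`. -/
def graphEdge (σ : A → List A) (p q : List A × List A) : Prop :=
  edgeRep σ p q ∨ edgeRep σ p q.swap ∨ edgeRep σ p.swap q ∨ edgeRep σ p.swap q.swap

/-- A representative generates a gap of natural 1-cutting points. -/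
def genGapRep (σ : A → List A) (p : List A × List A) : Prop :=
  ∃ (α β : A) (γ δ : List A),
    (σ α <:+ σ β ∧ σ α ≠ σ β) ∧
    List.Forall₂ (fun s t => σ s = σ t) γ δ ∧
    (α :: γ) <:+ substWord σ p.1 ∧ (β :: δ) <:+ substWord σ p.2

/-- The unordered pair represented by `p` generates a gap of natural 1-cutting points. -/
def genGap (σ : A → List A) (p : List A × List A) : Prop :=
  genGapRep σ p ∨ genGapRep σ p.swap

/-- The list of consecutive two-letter blocks of a word. -/
def pairsList (l : List A) : List (List A) :=
  List.zipWith (fun a b => [a, b]) l l.tail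

end Defs

/-!
Consider the graph on pairs of letters with an edge `ab → cd` whenever some occurrence of `cd`
in `u` starts inside the image `σ(a)` of an occurrence of `ab`. Since `u = σ^t(u)`, going down
`t` levels of this hierarchy of images is the same as following a walk of length `t`, and the
blocks reached depend only on the starting block. By primitivity every block reaches `u₀u₁`
(`σ(u₀)` begins with `u₀u₁`), which carries a loop, and `u₀u₁` reaches every factor of length
`2`. Shortening walks to fewer than `(#A)²` steps and padding with the loop, every block
reaches every factor of `L₂(u)` in exactly `n₀ ≥ 2(#A)² - 2` steps. So every image
`σ^{n₀}(u_j)` contains the start of an occurrence of every `w ∈ L₂(u)`; a window of length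
`2 max_a |σ^{n₀}(a)|` contains such an image, and the Perron eigenvector bounds
`|σ^{n₀}(a)|` by `C λ^{n₀}`.
-/

section RelWalk

variable {α : Type*} (r : α → α → Prop)

def RelWalk (n : ℕ) (a b : α) : Prop :=
  ∃ f : ℕ → α, f 0 = a ∧ f n = b ∧ ∀ k < n, r (f k) (f (k + 1))

variable {r}

lemma relWalk_zero (a : α) : RelWalk r 0 a a :=
  ⟨fun _ => a, rfl, rfl, fun _ h => absurd h (Nat.not_lt_zero _)⟩

lemma relWalk_of_loop {a : α} (h : r a a) (n : ℕ) : RelWalk r n a a :=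
  ⟨fun _ => a, rfl, rfl, fun _ _ => h⟩

lemma RelWalk.cons {n : ℕ} {a b c : α} (hab : r a b) (h : RelWalk r n b c) :
    RelWalk r (n + 1) a c := by
  obtain ⟨f, hf0, hfn, hf⟩ := h
  refine ⟨fun k => if k = 0 then a else f (k - 1), rfl, by simpa using hfn, ?_⟩
  rintro (_ | k) hk
  · simpa [hf0] using hab
  · simpa using hf k (by omega)

lemma RelWalk.exists_cons {n : ℕ} {a c : α} (h : RelWalk r (n + 1) a c) :
    ∃ b, r a b ∧ RelWalk r n b c := by
  obtain ⟨f, hf0, hfn, hf⟩ := h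
  exact ⟨f 1, hf0 ▸ hf 0 n.succ_pos, fun k => f (k + 1), rfl, hfn,
    fun k hk => hf (k + 1) (by omega)⟩

lemma RelWalk.eq_of_zero {a b : α} (h : RelWalk r 0 a b) : a = b := by
  obtain ⟨f, hf0, hfn, -⟩ := h
  exact hf0 ▸ hfn

lemma RelWalk.append {m n : ℕ} {a b c : α} (h₁ : RelWalk r m a b) (h₂ : RelWalk r n b c) :
    RelWalk r (m + n) a c := by
  induction m generalizing a with
  | zero => simpa [h₁.eq_of_zero] using h₂
  | succ m ih =>
    obtain ⟨a', haa', h⟩ := h₁.exists_cons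
    rw [Nat.add_right_comm]
    exact (ih h).cons haa'

lemma relWalk_of_chain {n : ℕ} {f : ℕ → α} (hf : ∀ k < n, r (f k) (f (k + 1))) {i j : ℕ}
    (hij : i ≤ j) (hjn : j ≤ n) : RelWalk r (j - i) (f i) (f j) :=
  ⟨fun k => f (i + k), rfl, by simp only [Nat.add_sub_cancel' hij], fun k hk => by
    simpa [Nat.add_assoc] using hf (i + k) (by omega)⟩

lemma RelWalk.exists_lt_card [Fintype α] {n : ℕ} {a b : α} (h : RelWalk r n a b) :
    ∃ d < Fintype.card α, RelWalk r d a b := by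
  induction n using Nat.strong_induction_on with
  | _ n ih =>
    by_cases hn : n < Fintype.card α
    · exact ⟨n, hn, h⟩
    obtain ⟨f, rfl, rfl, hf⟩ := h
    obtain ⟨i, j, hij, hfij⟩ := Fintype.exists_ne_map_eq_of_card_lt (fun k : Fin (n + 1) => f k)
      (by simp only [Fintype.card_fin]; omega)
    wlog hlt : i < j generalizing i j
    · exact this j i hij.symm hfij.symm (lt_of_le_of_ne (not_lt.1 hlt) hij.symm)
    have hjn : (j : ℕ) ≤ n := Nat.le_of_lt_succ j.2
    have hshort := (relWalk_of_chain hf (Nat.zero_le i) (by omega)).append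
      (hfij ▸ relWalk_of_chain hf hjn le_rfl)
    exact ih _ (by omega) hshort

end RelWalk

section Substitution

variable {A : Type*} (σ : A → List A)

lemma substPow_succ (p : ℕ) (w : List A) :
    substPow σ (p + 1) w = substPow σ p (substWord σ w) :=
  Function.iterate_succ_apply _ _ _

lemma substPow_add (s t : ℕ) (w : List A) :
    substPow σ (s + t) w = substPow σ s (substPow σ t w) :=
  Function.iterate_add_apply _ _ _ _

lemma substPow_append (p : ℕ) (v w : List A) :
    substPow σ p (v ++ w) = substPow σ p v ++ substPow σ p w := by
  induction p generalizing v w with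
  | zero => rfl
  | succ p ih => simp only [substPow_succ, substWord, List.flatMap_append, ih]

lemma substPow_singleton_succ (p : ℕ) (a : A) :
    substPow σ (p + 1) [a] = substPow σ p (σ a) := by
  simp [substPow_succ, substWord]

lemma substPow_one (a : A) : substPow σ 1 [a] = σ a :=
  substPow_singleton_succ σ 0 a

variable {σ}

lemma length_substPow_pos (hσ : ∀ a, σ a ≠ []) (p : ℕ) (a : A) :
    0 < (substPow σ p [a]).length := by
  induction p generalizing a with
  | zero => simp [substPow]
  | succ p ih =>
    obtain ⟨b, l, hbl⟩ := List.exists_cons_of_ne_nil (hσ a)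
    rw [substPow_singleton_succ, hbl, ← List.singleton_append, substPow_append,
      List.length_append]
    exact Nat.add_pos_left (ih b) _

lemma length_substPow_le_Sp [Fintype A] [Nonempty A] [DecidableEq A] (p : ℕ) (a : A) :
    (substPow σ p [a]).length ≤ Sp σ p :=
  Finset.le_sup' (fun a => (substPow σ p [a]).length) (Finset.mem_univ a)

end Substitution

section Segment

variable {A : Type*} (u : ℕ → A)

lemma seg_append {i j k : ℕ} (hij : i ≤ j) (hjk : j ≤ k) :
    seg u i j ++ seg u j k = seg u i k := by
  obtain ⟨m, rfl⟩ := Nat.exists_eq_add_of_le hij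
  obtain ⟨n, rfl⟩ := Nat.exists_eq_add_of_le hjk
  have hn : i + (m + n) - (i + m) = n := by omega
  simp [seg, hn, List.range_add, Nat.add_assoc, Function.comp_def]

lemma seg_zero_succ (n : ℕ) : seg u 0 (n + 1) = seg u 0 n ++ [u n] := by
  simp [seg, List.range_succ]

lemma seg_two (m : ℕ) : seg u m (m + 2) = [u m, u (m + 1)] := by
  simp [seg, List.range_succ]

lemma seg_infix_seg {i j q l : ℕ} (hiq : i ≤ q) (hqj : q + l ≤ j) :
    seg u q (q + l) <:+: seg u i j :=
  ⟨seg u i q, seg u (q + l) j, by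
    rw [seg_append u hiq (Nat.le_add_right q l), seg_append u (by omega) hqj]⟩

end Segment

section CutPoint

variable {A : Type*}

def cutPoint (σ : A → List A) (u : ℕ → A) (t n : ℕ) : ℕ :=
  (substPow σ t (seg u 0 n)).length

variable {σ : A → List A} {u : ℕ → A}

@[simp] lemma cutPoint_zero_left (σ : A → List A) (u : ℕ → A) (n : ℕ) :
    cutPoint σ u 0 n = n := by
  simp [cutPoint, substPow, seg]

@[simp] lemma cutPoint_zero_right (σ : A → List A) (u : ℕ → A) (t : ℕ) :
    cutPoint σ u t 0 = 0 := by
  induction t with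
  | zero => rfl
  | succ t ih =>
    simp only [cutPoint, seg, Nat.sub_self, List.range_zero, List.map_nil,
      List.length_eq_zero_iff] at ih ⊢
    rw [Nat.add_comm, substPow_add, ih]
    rfl

lemma cutPoint_succ (σ : A → List A) (u : ℕ → A) (t n : ℕ) :
    cutPoint σ u t (n + 1) = cutPoint σ u t n + (substPow σ t [u n]).length := by
  rw [cutPoint, seg_zero_succ, substPow_append, List.length_append, cutPoint]

lemma cutPoint_strictMono (hσ : ∀ a, σ a ≠ []) (t : ℕ) : StrictMono (cutPoint σ u t) :=
  strictMono_nat_of_lt_succ fun n => by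
    rw [cutPoint_succ]
    exact Nat.lt_add_of_pos_right (length_substPow_pos hσ t (u n))

lemma substPow_seg (hfix : IsFixedPoint σ u) (t n : ℕ) :
    substPow σ t (seg u 0 n) = seg u 0 (cutPoint σ u t n) := by
  induction t with
  | zero => simp [substPow]
  | succ t ih =>
    rw [cutPoint, Nat.add_comm, substPow_add, ih]
    exact hfix _

lemma cutPoint_cutPoint (hfix : IsFixedPoint σ u) (s t n : ℕ) :
    cutPoint σ u s (cutPoint σ u t n) = cutPoint σ u (s + t) n := by
  rw [cutPoint, ← substPow_seg hfix, ← substPow_add, cutPoint]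

lemma seg_cutPoint (hfix : IsFixedPoint σ u) (t n : ℕ) :
    seg u (cutPoint σ u t n) (cutPoint σ u t (n + 1)) = substPow σ t [u n] := by
  have hseg := substPow_seg hfix t (n + 1)
  have hsplit := seg_append u (Nat.zero_le (cutPoint σ u t n))
    ((cutPoint_succ σ u t n).symm ▸ Nat.le_add_right _ _ : _ ≤ cutPoint σ u t (n + 1))
  rw [seg_zero_succ, substPow_append, substPow_seg hfix, ← hsplit] at hseg
  exact (List.append_cancel_left hseg).symm

lemma getElem_substPow (hfix : IsFixedPoint σ u) {t n r : ℕ}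
    (hr : r < (substPow σ t [u n]).length) :
    (substPow σ t [u n])[r] = u (cutPoint σ u t n + r) := by
  simp [← seg_cutPoint hfix, seg]

end CutPoint

section Descends

variable {A : Type*}

/-- Position `q` of `u = σ^t(u)` lies in the block `σ^t(u_i)` coming from position `i`. -/
def Descends (σ : A → List A) (u : ℕ → A) (t i q : ℕ) : Prop :=
  cutPoint σ u t i ≤ q ∧ q < cutPoint σ u t (i + 1)

def blk (u : ℕ → A) (n : ℕ) : A × A := (u n, u (n + 1))

def BlockEdge (σ : A → List A) (u : ℕ → A) (v w : A × A) : Prop :=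
  ∃ i q, blk u i = v ∧ blk u q = w ∧ Descends σ u 1 i q

variable {σ : A → List A} {u : ℕ → A}

lemma descends_zero_iff {i q : ℕ} : Descends σ u 0 i q ↔ q = i := by
  simp only [Descends, cutPoint_zero_left]
  omega

lemma Descends.trans (hσ : ∀ a, σ a ≠ []) (hfix : IsFixedPoint σ u) {s t i q r : ℕ}
    (h₁ : Descends σ u t i q) (h₂ : Descends σ u s q r) : Descends σ u (s + t) i r := by
  have hmono := (cutPoint_strictMono (u := u) hσ s).monotone
  rw [Descends, ← cutPoint_cutPoint hfix, ← cutPoint_cutPoint hfix]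
  exact ⟨(hmono h₁.1).trans h₂.1, h₂.2.trans_le (hmono h₁.2)⟩

lemma exists_descends (hσ : ∀ a, σ a ≠ []) (t r : ℕ) : ∃ i, Descends σ u t i r := by
  have hmono := cutPoint_strictMono (u := u) hσ t
  induction r with
  | zero => exact ⟨0, by simpa [Descends] using hmono Nat.zero_lt_one⟩
  | succ r ih =>
    obtain ⟨i, hi, hr⟩ := ih
    by_cases h : r + 1 < cutPoint σ u t (i + 1)
    · exact ⟨i, by omega, h⟩
    · exact ⟨i + 1, by omega, by have := hmono (show i + 1 < i + 1 + 1 by omega); omega⟩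

lemma Descends.exists_of_add (hσ : ∀ a, σ a ≠ []) (hfix : IsFixedPoint σ u) {s t i r : ℕ}
    (h : Descends σ u (s + t) i r) : ∃ q, Descends σ u t i q ∧ Descends σ u s q r := by
  obtain ⟨q, hq⟩ := exists_descends hσ s r
  have hmono := (cutPoint_strictMono (u := u) hσ s).monotone
  refine ⟨q, ⟨?_, ?_⟩, hq⟩
  · by_contra! hlt
    have := hmono (show q + 1 ≤ _ from hlt)
    rw [cutPoint_cutPoint hfix] at this
    exact absurd hq.2 (by have := h.1; omega)
  · by_contra! hle
    have := hmono hle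
    rw [cutPoint_cutPoint hfix] at this
    exact absurd hq.1 (by have := h.2; omega)

lemma u_cutPoint_add_congr (hfix : IsFixedPoint σ u) {t i i' p : ℕ} (h : u i = u i')
    (hp : p < (substPow σ t [u i]).length) :
    u (cutPoint σ u t i + p) = u (cutPoint σ u t i' + p) := by
  rw [← getElem_substPow hfix hp, ← getElem_substPow hfix (h ▸ hp)]
  congr 2
  rw [h]

lemma Descends.exists_of_blk_eq (hσ : ∀ a, σ a ≠ []) (hfix : IsFixedPoint σ u)
    {t i i' q : ℕ} (hii' : blk u i = blk u i') (h : Descends σ u t i q) :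
    ∃ q', Descends σ u t i' q' ∧ blk u q' = blk u q := by
  simp only [blk, Prod.mk.injEq] at hii' ⊢
  obtain ⟨h₀, h₁⟩ := hii'
  obtain ⟨p, rfl⟩ := Nat.exists_eq_add_of_le h.1
  have hp := h.2
  rw [cutPoint_succ] at hp
  refine ⟨cutPoint σ u t i' + p, ⟨Nat.le_add_right _ _, ?_⟩, ?_, ?_⟩
  · rw [cutPoint_succ, ← h₀]
    omega
  · exact (u_cutPoint_add_congr hfix h₀ (by omega)).symm
  · rcases Nat.lt_or_ge (p + 1) (substPow σ t [u i]).length with hlt | hge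
    · exact (u_cutPoint_add_congr hfix h₀ hlt).symm
    · have hq : cutPoint σ u t i + p + 1 = cutPoint σ u t (i + 1) + 0 := by
        rw [cutPoint_succ]; omega
      have hq' : cutPoint σ u t i' + p + 1 = cutPoint σ u t (i' + 1) + 0 := by
        rw [cutPoint_succ, ← h₀]; omega
      rw [hq, hq']
      exact (u_cutPoint_add_congr hfix h₁ (length_substPow_pos hσ t _)).symm

lemma Descends.relWalk (hσ : ∀ a, σ a ≠ []) (hfix : IsFixedPoint σ u) {t i q : ℕ}
    (h : Descends σ u t i q) : RelWalk (BlockEdge σ u) t (blk u i) (blk u q) := by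
  induction t generalizing q with
  | zero =>
    rw [descends_zero_iff.1 h]
    exact relWalk_zero _
  | succ t ih =>
    obtain ⟨m, him, hmq⟩ := Descends.exists_of_add (s := 1) hσ hfix (by rwa [Nat.add_comm])
    exact (ih him).append ((relWalk_zero _).cons ⟨m, q, rfl, rfl, hmq⟩)

lemma exists_descends_of_relWalk (hσ : ∀ a, σ a ≠ []) (hfix : IsFixedPoint σ u) {n : ℕ}
    {i : ℕ} {w : A × A} (h : RelWalk (BlockEdge σ u) n (blk u i) w) :
    ∃ q, Descends σ u n i q ∧ blk u q = w := by
  induction n generalizing i with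
  | zero => exact ⟨i, descends_zero_iff.2 rfl, h.eq_of_zero⟩
  | succ n ih =>
    obtain ⟨_, ⟨i₀, q₀, hi₀, rfl, hd⟩, hw⟩ := h.exists_cons
    obtain ⟨q₁, hd₁, hq₁⟩ := hd.exists_of_blk_eq hσ hfix hi₀
    obtain ⟨q, hq, rfl⟩ := ih (hq₁ ▸ hw)
    exact ⟨q, hd₁.trans hσ hfix hq, rfl⟩

end Descends

section Primitive

variable {A : Type*} {σ : A → List A} {u : ℕ → A}

lemma two_le_length_apply_u_zero [Fintype A] (h2 : 2 ≤ Fintype.card A)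
    (hσ : ∀ a, σ a ≠ []) (hprim : IsPrimitiveSubst σ) (hfix : IsFixedPoint σ u) :
    2 ≤ (σ (u 0)).length := by
  by_contra! hlt
  have hone : (σ (u 0)).length = 1 := by
    have := List.length_pos_iff.2 (hσ (u 0)); omega
  have hσu : σ (u 0) = [u 0] := by
    simpa [substWord, seg, hone] using hfix 1
  have hpow : ∀ p, substPow σ p [u 0] = [u 0] := fun p => by
    induction p with
    | zero => rfl
    | succ p ih => rw [substPow_singleton_succ, hσu, ih]
  obtain ⟨k, hk⟩ := hprim
  obtain ⟨a, ha⟩ := Fintype.exists_ne_of_one_lt_card h2 (u 0)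
  simpa [hpow k, ha] using hk a (u 0)

lemma cutPoint_one_one : cutPoint σ u 1 1 = (σ (u 0)).length := by
  rw [cutPoint_succ, cutPoint_zero_right, substPow_one, Nat.zero_add]

lemma blockEdge_blk_zero (hσ : ∀ a, σ a ≠ []) : BlockEdge σ u (blk u 0) (blk u 0) :=
  ⟨0, 0, rfl, rfl, by simpa [Descends] using cutPoint_strictMono (u := u) hσ 1 Nat.zero_lt_one⟩

lemma descends_zero_self (hσ : ∀ a, σ a ≠ []) (hfix : IsFixedPoint σ u)
    (hu₀ : 2 ≤ (σ (u 0)).length) (m : ℕ) : Descends σ u m 0 m := by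
  refine ⟨by simp, show m < cutPoint σ u m 1 from ?_⟩
  induction m with
  | zero => simp
  | succ m ih =>
    have := cutPoint_strictMono (u := u) hσ m (show 1 < 2 by omega)
    have := (cutPoint_strictMono (u := u) hσ m).monotone (cutPoint_one_one ▸ hu₀)
    rw [cutPoint_cutPoint hfix] at this
    omega

lemma exists_descends_blk_zero (hσ : ∀ a, σ a ≠ []) (hfix : IsFixedPoint σ u)
    (hu₀ : 2 ≤ (σ (u 0)).length) {k : ℕ} (hk : ∀ a b, a ∈ substPow σ k [b]) (i : ℕ) :
    ∃ q, Descends σ u (1 + k) i q ∧ blk u q = blk u 0 := by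
  obtain ⟨p, hp, hpu⟩ := List.getElem_of_mem (hk (u 0) (u i))
  have hq₀ : u (cutPoint σ u k i + p) = u 0 := by rw [← getElem_substPow hfix hp, hpu]
  have hlen : 2 ≤ (substPow σ 1 [u (cutPoint σ u k i + p)]).length := by
    rwa [substPow_one, hq₀]
  refine ⟨cutPoint σ u 1 (cutPoint σ u k i + p), Descends.trans hσ hfix
    ⟨Nat.le_add_right _ _, by rw [cutPoint_succ]; omega⟩
    ⟨le_rfl, cutPoint_strictMono hσ 1 (Nat.lt_succ_self _)⟩, ?_⟩
  have h₀ := u_cutPoint_add_congr hfix hq₀ (t := 1) (p := 0) (by omega)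
  have h₁ := u_cutPoint_add_congr hfix hq₀ (t := 1) (p := 1) (by omega)
  simp only [cutPoint_zero_right, Nat.add_zero, Nat.zero_add] at h₀ h₁
  simp [blk, h₀, h₁]

lemma exists_descends_blk [Fintype A] (h2 : 2 ≤ Fintype.card A) (hσ : ∀ a, σ a ≠ [])
    (hprim : IsPrimitiveSubst σ) (hfix : IsFixedPoint σ u) {n : ℕ}
    (hn : 2 * Fintype.card A ^ 2 ≤ n + 2) (i m : ℕ) :
    ∃ q, Descends σ u n i q ∧ blk u q = blk u m := by
  have hu₀ := two_le_length_apply_u_zero h2 hσ hprim hfix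
  obtain ⟨k, hk⟩ := hprim
  obtain ⟨q₀, hq₀, hbq₀⟩ := exists_descends_blk_zero hσ hfix hu₀ hk i
  obtain ⟨d₁, hd₁, hw₁⟩ := (hbq₀ ▸ hq₀.relWalk hσ hfix).exists_lt_card
  obtain ⟨d₂, hd₂, hw₂⟩ := ((descends_zero_self hσ hfix hu₀ m).relWalk hσ hfix).exists_lt_card
  rw [Fintype.card_prod, ← sq] at hd₁ hd₂
  have hw := hw₁.append ((relWalk_of_loop (blockEdge_blk_zero hσ) (n - d₁ - d₂)).append hw₂)
  rw [show d₁ + (n - d₁ - d₂ + d₂) = n by omega] at hw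
  exact exists_descends_of_relWalk hσ hfix hw

lemma seg_two_infix_seg_window [Fintype A] [Nonempty A] [DecidableEq A]
    (h2 : 2 ≤ Fintype.card A) (hσ : ∀ a, σ a ≠ []) (hprim : IsPrimitiveSubst σ)
    (hfix : IsFixedPoint σ u) {n : ℕ} (hn : 2 * Fintype.card A ^ 2 ≤ n + 2) (m x : ℕ) :
    seg u m (m + 2) <:+: seg u x (x + 2 * Sp σ n) := by
  have hSp := (length_substPow_pos hσ n (u 0)).trans_le (length_substPow_le_Sp n (u 0))
  -- the `n`-cutting point `cutPoint σ u n j` lies in `[x, x + Sp σ n)`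
  obtain ⟨j, hj⟩ := exists_descends (u := u) hσ n (x + Sp σ n - 1)
  obtain ⟨q, hq, hqm⟩ := exists_descends_blk h2 hσ hprim hfix hn j m
  have := cutPoint_succ σ u n j
  have := length_substPow_le_Sp (σ := σ) n (u j)
  unfold Descends at hj hq
  simp only [blk, Prod.mk.injEq] at hqm
  rw [seg_two, ← hqm.1, ← hqm.2, ← seg_two]
  exact seg_infix_seg u (by omega) (by omega)

end Primitive

section Eigenvector

variable {A : Type*} [Fintype A] [DecidableEq A] {σ : A → List A}
  {lam : ℝ} {β : A → ℝ}

lemma sum_map_apply_eq (heig : (incMatrixR σ).mulVec β = lam • β) (a : A) :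
    ((σ a).map β).sum = lam * β a := by
  have := congrFun heig a
  simp only [Matrix.mulVec, dotProduct, incMatrixR, Matrix.of_apply, Pi.smul_apply,
    smul_eq_mul] at this
  rw [← this, Finset.sum_list_map_count]
  simp_rw [nsmul_eq_mul]
  exact Finset.sum_subset (Finset.subset_univ _) fun b _ hb => by
    simp [List.count_eq_zero_of_not_mem (by simpa using hb)]

lemma sum_map_substWord (heig : (incMatrixR σ).mulVec β = lam • β) (w : List A) :
    ((substWord σ w).map β).sum = lam * (w.map β).sum := by
  induction w with
  | nil => simp [substWord]
  | cons a w ih =>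
    simp_all [substWord, sum_map_apply_eq heig, mul_add]

lemma sum_map_substPow (heig : (incMatrixR σ).mulVec β = lam • β) (p : ℕ) (w : List A) :
    ((substPow σ p w).map β).sum = lam ^ p * (w.map β).sum := by
  induction p generalizing w with
  | zero => simp [substPow]
  | succ p ih => rw [substPow_succ, ih, sum_map_substWord heig, pow_succ, mul_assoc]

lemma length_substPow_le [Nonempty A] (hβ : ∀ a, 0 < β a)
    (heig : (incMatrixR σ).mulVec β = lam • β) (p : ℕ) (a : A) :
    ((substPow σ p [a]).length : ℝ) ≤ Cst β * lam ^ p := by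
  set βmin := Finset.univ.inf' Finset.univ_nonempty β
  set βmax := Finset.univ.sup' Finset.univ_nonempty β
  have hmin : 0 < βmin := (Finset.lt_inf'_iff Finset.univ_nonempty).2 fun b _ => hβ b
  have hsum : ((substPow σ p [a]).map β).sum = lam ^ p * β a := by
    simpa using sum_map_substPow heig p [a]
  have hlow : ((substPow σ p [a]).length : ℝ) * βmin ≤ lam ^ p * β a := by
    rw [← hsum]
    simpa using List.card_nsmul_le_sum ((substPow σ p [a]).map β) βmin
      (by simpa using fun b _ => Finset.inf'_le β (Finset.mem_univ b))
  have hlam : 0 ≤ lam ^ p := nonneg_of_mul_nonneg_left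
    ((mul_nonneg (Nat.cast_nonneg _) hmin.le).trans hlow) (hβ a)
  calc ((substPow σ p [a]).length : ℝ) ≤ lam ^ p * β a / βmin := (le_div_iff₀ hmin).2 hlow
    _ ≤ lam ^ p * (βmax / βmin) := by
      rw [mul_div_assoc]
      gcongr
      exact Finset.le_sup' β (Finset.mem_univ a)
    _ ≤ lam ^ p * Cst β := by gcongr; exact Nat.le_ceil _
    _ = Cst β * lam ^ p := mul_comm _ _

lemma Sp_le [Nonempty A] (hβ : ∀ a, 0 < β a) (heig : (incMatrixR σ).mulVec β = lam • β)
    (p : ℕ) :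
    (Sp σ p : ℝ) ≤ Cst β * lam ^ p := by
  obtain ⟨a, -, ha⟩ := Finset.exists_mem_eq_sup' Finset.univ_nonempty
    fun a => (substPow σ p [a]).length
  rw [Sp, ha]
  exact length_substPow_le hβ heig p a

end Eigenvector

theorem stmt_2_general (A : Type*) [Fintype A] [DecidableEq A] [Nonempty A]
    (h2 : 2 ≤ Fintype.card A)
    (σ : A → List A) (hσne : ∀ a, σ a ≠ [])
    (hprim : IsPrimitiveSubst σ)
    (u : ℕ → A) (hfix : IsFixedPoint σ u)
    (lam : ℝ) (β : A → ℝ) (hβ : ∀ a, 0 < β a)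
    (heig : (incMatrixR σ).mulVec β = lam • β)
    (n₀ : ℕ) (hn₀ : n₀ = Fintype.card A ^ 4 - 2 * Fintype.card A ^ 2 + 2)
    (G : ℕ) (hG : G = ⌈2 * (Cst β : ℝ) * (Sp σ 1 : ℝ) * lam ^ n₀⌉₊) :
    (∀ w ∈ factors u 2, ∀ i : ℕ, w <:+: seg u i (i + G)) ∧ gapConst u ≤ G := by
  have hn₀_ge : 2 * Fintype.card A ^ 2 ≤ n₀ + 2 := by
    have h4 : 4 ≤ Fintype.card A ^ 2 := by nlinarith
    have : 4 * Fintype.card A ^ 2 ≤ Fintype.card A ^ 4 := by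
      rw [show Fintype.card A ^ 4 = Fintype.card A ^ 2 * Fintype.card A ^ 2 by ring]
      exact Nat.mul_le_mul_right _ h4
    omega
  have hSp : 2 * Sp σ n₀ ≤ G := by
    have hS₁ : (1 : ℝ) ≤ Sp σ 1 := by
      exact_mod_cast (length_substPow_pos hσne 1 (Classical.arbitrary A)).trans_le
        (length_substPow_le_Sp 1 _)
    have hSpC := Sp_le hβ heig n₀
    rw [hG, ← Nat.cast_le (α := ℝ)]
    refine le_trans ?_ (Nat.le_ceil _)
    push_cast
    nlinarith [(Nat.cast_nonneg (Sp σ n₀) : (0 : ℝ) ≤ _)]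
  have hocc : ∀ w ∈ factors u 2, ∀ i : ℕ, w <:+: seg u i (i + G) := by
    rintro w ⟨m, rfl⟩ x
    exact (seg_two_infix_seg_window h2 hσne hprim hfix hn₀_ge m x).trans
      (seg_infix_seg u le_rfl (by omega))
  refine ⟨hocc, csSup_le ⟨_, _, ⟨0, rfl⟩, rfl⟩ ?_⟩
  rintro _ ⟨w, hw, rfl⟩
  exact Nat.sInf_le (hocc w hw)

/-- Lemma 2.1 (computability of `g`): every word of `L₂(u)` occurs in every window of
length `G = ⌈2 C (max_a |σ(a)|) λ^{n₀}⌉` of `u`, where `n₀ = (#A)⁴ - 2(#A)² + 2`;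
in particular the constant `g` is at most `G`. -/
theorem stmt_2 (A : Type*) [Fintype A] [DecidableEq A] [Nonempty A]
    (h2 : 2 ≤ Fintype.card A)
    (σ : A → List A) (hσne : ∀ a, σ a ≠ [])
    (hprim : IsPrimitiveSubst σ)
    (u : ℕ → A) (hfix : IsFixedPoint σ u) (hap : AperiodicSeq u)
    (lam : ℝ) (β : A → ℝ) (hβ : ∀ a, 0 < β a)
    (heig : (incMatrixR σ).mulVec β = lam • β)
    (n₀ : ℕ) (hn₀ : n₀ = Fintype.card A ^ 4 - 2 * Fintype.card A ^ 2 + 2)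
    (G : ℕ) (hG : G = ⌈2 * (Cst β : ℝ) * (Sp σ 1 : ℝ) * lam ^ n₀⌉₊) :
    (∀ w ∈ factors u 2, ∀ i : ℕ, w <:+: seg u i (i + G)) ∧ gapConst u ≤ G :=
  stmt_2_general A h2 σ hσne hprim u hfix lam β hβ heig n₀ hn₀ G hG
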